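/- Core of Proposition 3 (insecurity under reused randomness): for all s₁, s₂ : Fin n → ZMod 2, setting U = X^{s₂} * H^{⊗n} * X^{s₁} and c = s₁ + s₂, one has U * U = χ(s₁, c) • (X^c * Z^c); consequently, for every complex matrix σ indexed by I = (Fin n → ZMod 2), (U*U) * σ * (U*U)ᴴ = (X^c * Z^c) * σ * (X^c * Z^c)ᴴ. (Encrypting a ciphertext again with the same randomness yields the weak one-key scheme [[p_c = 1/2^n, X^c Z^c]].) -/

import Mathlib

open Matrix BigOperators

/-- The inner product `a ⊙ b = ∑ i, a i * b i` in `ZMod 2`. -/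
def bdot {n : ℕ} (a b : Fin n → ZMod 2) : ZMod 2 := ∑ i, a i * b i

/-- `χ(a,b) = (-1)^(a ⊙ b)` as a complex number. -/
noncomputable def chi {n : ℕ} (a b : Fin n → ZMod 2) : ℂ :=
  if bdot a b = 1 then -1 else 1

/-- The `n`-qubit Pauli string `X^a`: `|v⟩ ↦ |v ⊕ a⟩`. -/
noncomputable def PX {n : ℕ} (a : Fin n → ZMod 2) :
    Matrix (Fin n → ZMod 2) (Fin n → ZMod 2) ℂ :=
  fun u v => if u = v + a then 1 else 0

/-- The `n`-qubit Pauli string `Z^b`: `|v⟩ ↦ (-1)^(b ⊙ v) |v⟩`. -/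
noncomputable def PZ {n : ℕ} (b : Fin n → ZMod 2) :
    Matrix (Fin n → ZMod 2) (Fin n → ZMod 2) ℂ :=
  fun u v => if u = v then chi b v else 0

/-- The `n`-qubit Hadamard transform `H^{⊗n}`. -/
noncomputable def Hn (n : ℕ) :
    Matrix (Fin n → ZMod 2) (Fin n → ZMod 2) ℂ :=
  fun u v => (Real.sqrt (2 ^ n) : ℂ)⁻¹ * chi u v

/-!
With `c = s₁ + s₂`, the Pauli–Hadamard relations `X^a X^b = X^{a+b}`, `H X^a = Z^a H`,
`H H = 1` and `Z^a X^b = χ(a,b) X^b Z^a` give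
`U U = X^{s₂} H X^c H X^{s₁} = X^{s₂} Z^c X^{s₁} = χ(c,s₁) X^c Z^c`.
`H H = 1` is the orthogonality `∑_w χ(w,t) = 2^n [t = 0]` of the characters of `(ZMod 2)ⁿ`,
and the global phase `χ(s₁,c) = ±1` cancels in the conjugation `σ ↦ U U σ (U U)ᴴ`.
-/

theorem smul_mul_mul_conjTranspose_smul {m l α : Type*} [Fintype l] [CommSemiring α] [StarRing α]
    {c : α} (hc : c ∈ unitary α) (M : Matrix m l α) (σ : Matrix l l α) :
    c • M * σ * (c • M)ᴴ = M * σ * Mᴴ := by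
  rw [conjTranspose_smul, Matrix.smul_mul, Matrix.mul_smul, Matrix.smul_mul, smul_smul,
    Unitary.star_mul_self_of_mem hc, one_smul]

section

variable {n : ℕ}

theorem bdot_comm (a b : Fin n → ZMod 2) : bdot a b = bdot b a := by
  simp only [bdot, mul_comm]

theorem bdot_add_right (a b c : Fin n → ZMod 2) : bdot a (b + c) = bdot a b + bdot a c := by
  simp only [bdot, Pi.add_apply, mul_add, Finset.sum_add_distrib]

theorem chi_comm (a b : Fin n → ZMod 2) : chi a b = chi b a := by
  rw [chi, chi, bdot_comm]

theorem chi_add_right (a b c : Fin n → ZMod 2) : chi a (b + c) = chi a b * chi a c := by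
  simp only [chi, bdot_add_right]
  have h01 : ∀ x : ZMod 2, x = 0 ∨ x = 1 := by decide
  rcases h01 (bdot a b) with hb | hb <;> rcases h01 (bdot a c) with hc | hc <;>
    simp [hb, hc, show (1 + 1 : ZMod 2) = 0 from rfl]

theorem chi_add_left (a b c : Fin n → ZMod 2) : chi (a + b) c = chi a c * chi b c := by
  rw [chi_comm, chi_add_right, chi_comm c, chi_comm c]

theorem chi_zero_right (a : Fin n → ZMod 2) : chi a 0 = 1 := by
  simp [chi, bdot]

theorem chi_mem_unitary (a b : Fin n → ZMod 2) : chi a b ∈ unitary ℂ := by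
  unfold chi
  split_ifs <;> simp [Unitary.mem_iff]

noncomputable def chiAddChar (t : Fin n → ZMod 2) : AddChar (Fin n → ZMod 2) ℂ where
  toFun w := chi w t
  map_zero_eq_one' := by rw [chi_comm, chi_zero_right]
  map_add_eq_mul' a b := chi_add_left a b t

theorem chiAddChar_ne_one {t : Fin n → ZMod 2} (ht : t ≠ 0) : chiAddChar t ≠ 1 := by
  obtain ⟨i, hi⟩ := Function.ne_iff.mp ht
  refine AddChar.ne_one_iff.mpr ⟨Pi.single i 1, ?_⟩
  have hti : t i = 1 := (by decide : ∀ x : ZMod 2, x ≠ 0 → x = 1) _ hi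
  norm_num [chiAddChar, chi, bdot, Pi.single_apply, hti]

theorem sum_chi_left (t : Fin n → ZMod 2) :
    ∑ w, chi w t = if t = 0 then (2 : ℂ) ^ n else 0 := by
  split_ifs with ht
  · subst ht
    simp [chi_zero_right]
  · exact AddChar.sum_eq_zero_of_ne_one (chiAddChar_ne_one ht)

theorem PX_mul_apply (a : Fin n → ZMod 2) (M : Matrix (Fin n → ZMod 2) (Fin n → ZMod 2) ℂ)
    (u v : Fin n → ZMod 2) : (PX a * M) u v = M (u + a) v := by
  have hshift (w : Fin n → ZMod 2) : u = w + a ↔ u + a = w := by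
    constructor <;> rintro rfl <;> simp [add_assoc, ZModModule.add_self]
  simp [mul_apply, PX, hshift]

theorem mul_PX_apply (M : Matrix (Fin n → ZMod 2) (Fin n → ZMod 2) ℂ) (a : Fin n → ZMod 2)
    (u v : Fin n → ZMod 2) : (M * PX a) u v = M u (v + a) := by
  simp [mul_apply, PX]

theorem PZ_mul_apply (b : Fin n → ZMod 2) (M : Matrix (Fin n → ZMod 2) (Fin n → ZMod 2) ℂ)
    (u v : Fin n → ZMod 2) : (PZ b * M) u v = chi b u * M u v := by
  simp [mul_apply, PZ]

theorem mul_PZ_apply (M : Matrix (Fin n → ZMod 2) (Fin n → ZMod 2) ℂ) (b : Fin n → ZMod 2)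
    (u v : Fin n → ZMod 2) : (M * PZ b) u v = M u v * chi b v := by
  simp [mul_apply, PZ]

theorem PX_mul_PX (a b : Fin n → ZMod 2) : PX a * PX b = PX (a + b) := by
  ext u v
  rw [PX_mul_apply]
  simp only [PX, ← eq_sub_iff_add_eq, ZModModule.sub_eq_add, add_assoc, add_comm b]

theorem PZ_mul_PX (a b : Fin n → ZMod 2) : PZ a * PX b = chi a b • (PX b * PZ a) := by
  ext u v
  rw [PZ_mul_apply, Matrix.smul_apply, mul_PZ_apply]
  simp only [PX, smul_eq_mul, mul_ite, ite_mul, mul_one, mul_zero, one_mul, zero_mul]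
  split_ifs with h
  · rw [h, chi_add_right, mul_comm]
  · rfl

theorem Hn_mul_PX (a : Fin n → ZMod 2) : Hn n * PX a = PZ a * Hn n := by
  ext u v
  rw [mul_PX_apply, PZ_mul_apply]
  simp only [Hn, chi_add_right, chi_comm u a]
  ring

theorem Hn_mul_Hn : Hn n * Hn n = 1 := by
  have hnorm : ((Real.sqrt (2 ^ n) : ℂ)⁻¹) * (Real.sqrt (2 ^ n) : ℂ)⁻¹ * 2 ^ n = 1 := by
    rw [← mul_inv, ← Complex.ofReal_mul, Real.mul_self_sqrt (by positivity)]
    push_cast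
    exact inv_mul_cancel₀ (pow_ne_zero n two_ne_zero)
  ext u v
  calc (Hn n * Hn n) u v
      = (Real.sqrt (2 ^ n) : ℂ)⁻¹ * (Real.sqrt (2 ^ n) : ℂ)⁻¹ * ∑ w, chi w (u + v) := by
        simp only [mul_apply, Hn, Finset.mul_sum, chi_add_right, chi_comm u]
        ring_nf
    _ = (1 : Matrix (Fin n → ZMod 2) (Fin n → ZMod 2) ℂ) u v := by
        rcases eq_or_ne u v with rfl | huv
        · simp [sum_chi_left, ZModModule.add_self, hnorm]
        · simp [sum_chi_left, add_eq_zero_iff_eq_neg, ZModModule.neg_eq_self, huv]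

theorem PX_Hn_PX_mul_self (s₁ s₂ : Fin n → ZMod 2) :
    (PX s₂ * Hn n * PX s₁) * (PX s₂ * Hn n * PX s₁) =
      chi s₁ (s₁ + s₂) • (PX (s₁ + s₂) * PZ (s₁ + s₂)) :=
  calc (PX s₂ * Hn n * PX s₁) * (PX s₂ * Hn n * PX s₁)
      = PX s₂ * (Hn n * (PX s₁ * PX s₂)) * Hn n * PX s₁ := by simp only [Matrix.mul_assoc]
    _ = PX s₂ * PZ (s₁ + s₂) * (Hn n * Hn n) * PX s₁ := by
        rw [PX_mul_PX, Hn_mul_PX]; simp only [Matrix.mul_assoc]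
    _ = PX s₂ * (PZ (s₁ + s₂) * PX s₁) := by rw [Hn_mul_Hn, Matrix.mul_one, Matrix.mul_assoc]
    _ = chi s₁ (s₁ + s₂) • (PX (s₁ + s₂) * PZ (s₁ + s₂)) := by
        rw [PZ_mul_PX, Matrix.mul_smul, ← Matrix.mul_assoc, PX_mul_PX, add_comm s₂, chi_comm]

end

theorem reused_randomness_insecure (n : ℕ) (s₁ s₂ : Fin n → ZMod 2) :
    (PX s₂ * Hn n * PX s₁) * (PX s₂ * Hn n * PX s₁) =
        chi s₁ (s₁ + s₂) • (PX (s₁ + s₂) * PZ (s₁ + s₂)) ∧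
      ∀ σ : Matrix (Fin n → ZMod 2) (Fin n → ZMod 2) ℂ,
        ((PX s₂ * Hn n * PX s₁) * (PX s₂ * Hn n * PX s₁)) * σ *
            ((PX s₂ * Hn n * PX s₁) * (PX s₂ * Hn n * PX s₁))ᴴ =
          (PX (s₁ + s₂) * PZ (s₁ + s₂)) * σ * (PX (s₁ + s₂) * PZ (s₁ + s₂))ᴴ :=
  ⟨PX_Hn_PX_mul_self s₁ s₂, fun σ => by
    rw [PX_Hn_PX_mul_self, smul_mul_mul_conjTranspose_smul (chi_mem_unitary _ _)]⟩
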